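/- arXiv:1805.11608 — 2 statements merged into one kernel-verified Lean document; each statement's English description precedes it below -/
import Mathlib

section
/- In the set ℕ → ℕ with the pointwise order (f ≤ g iff f(n) ≤ g(n) for all n), there exists an increasing chain of chains (C_γ)_{γ<ω₁} of length ω₁ in IC(ℕ → ℕ, ≤) (i.e., γ < γ' < ω₁ implies C_γ ⊑ C_{γ'} and not C_{γ'} ⊑ C_γ) such that no C_γ is ⊑-below any maximal increasing chain in IC(ℕ → ℕ, ≤). -/
universe u

/-- An increasing chain in a quasi-ordered set `(X, r)`: an ordinal `len` together with a
family of elements of `X` indexed by the ordinals below `len`, such that `β < γ` implies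
`x_β ≺ x_γ` (i.e. `x_β ≼ x_γ` and not `x_γ ≼ x_β`). -/
structure IncChain (X : Type u) (r : X → X → Prop) : Type (u + 1) where
  len : Ordinal.{u}
  val : (β : Ordinal.{u}) → β < len → X
  inc : ∀ (β γ : Ordinal.{u}) (hβ : β < len) (hγ : γ < len), β < γ →
    r (val β hβ) (val γ hγ) ∧ ¬ r (val γ hγ) (val β hβ)

namespace IncChain

variable {X : Type u} {r : X → X → Prop}

/-- The domination quasi-order `⊑` on increasing chains. -/
def Le (A B : IncChain X r) : Prop :=
  ∀ (β : Ordinal.{u}) (hβ : β < A.len), ∃ (γ : Ordinal.{u}) (hγ : γ < B.len),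
    r (A.val β hβ) (B.val γ hγ)

/-- The equivalence `≐` induced by `⊑`. -/
def Equiv (A B : IncChain X r) : Prop := A.Le B ∧ B.Le A

/-- `A ⊆ B`: every element of the chain `A` occurs in the chain `B`. -/
def Subset (A B : IncChain X r) : Prop :=
  ∀ (β : Ordinal.{u}) (hβ : β < A.len), ∃ (γ : Ordinal.{u}) (hγ : γ < B.len),
    B.val γ hγ = A.val β hβ

/-- `A` is cofinal in `B`. -/
def Cofinal (A B : IncChain X r) : Prop := A.Subset B ∧ B.Le A

/-- The cofinality of a chain: the least ordinal indexing a chain cofinal in it. -/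
noncomputable def cof (B : IncChain X r) : Ordinal.{u} :=
  sInf {α : Ordinal.{u} | ∃ A : IncChain X r, A.len = α ∧ A.Cofinal B}

/-- A maximal chain. -/
def Maximal (A : IncChain X r) : Prop := ∀ B : IncChain X r, A.Le B → B.Le A

end IncChain

/-!
A maximal chain `B = (x_β)` absorbs `B + g` for every `g`, so it dominates every function. Pick
`x_{β_k} ≥ k` and a member `x_γ` above the diagonal `n ↦ x_{β_n}(n) + 1`: if `γ ≤ β_k` for some
`k` the diagonal is violated at `k`, and otherwise `x_γ(0) ≥ k` for every `k`. So there are no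
maximal chains at all.

For the chain of chains, `f ↦ (f + k)_{k<ω}` is strictly `⊑`-monotone along the relation
"`g - f → ∞`". Every countable family in `ℕ → ℕ` has an upper bound for this relation, so
transfinite recursion yields an `ω₁`-sequence increasing for it.
-/

open Filter Ordinal Cardinal

theorem Ordinal.countable_Iio_of_lt_omega_one {o : Ordinal} (h : o < ω₁) :
    (Set.Iio o).Countable := by
  rwa [← le_aleph0_iff_set_countable, Cardinal.mk_Iio_ordinal, lift_le_aleph0, ← lt_aleph_one_iff,
    ← lt_ord, ord_aleph]

theorem exists_seq_omega_one_of_countable_bounded {X : Type*} (R : X → X → Prop)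
    (h : ∀ s : Set X, s.Countable → ∃ x, ∀ y ∈ s, R y x) :
    ∃ f : Ordinal → X, ∀ β γ, β < γ → γ < ω₁ → R (f β) (f γ) := by
  have : ∀ s : Set X, ∃ x, s.Countable → ∀ y ∈ s, R y x := by
    intro s
    by_cases hs : s.Countable
    · obtain ⟨x, hx⟩ := h s hs
      exact ⟨x, fun _ => hx⟩
    · obtain ⟨x, -⟩ := h ∅ Set.countable_empty
      exact ⟨x, fun hs' => absurd hs' hs⟩
  choose bound hbound using this
  let f : Ordinal → X :=
    wellFounded_lt.fix fun γ ih => bound (Set.range fun β : Set.Iio γ => ih β β.2)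
  refine ⟨f, fun β γ hβγ hγ => ?_⟩
  rw [show f γ = _ from wellFounded_lt.fix_eq _ γ]
  have : Countable (Set.Iio γ) := (countable_Iio_of_lt_omega_one hγ).to_subtype
  exact hbound _ (Set.countable_range _) _ ⟨⟨β, hβγ⟩, rfl⟩

namespace IncChain

section Preorder

variable {X : Type u} [Preorder X]

theorem val_le_val (B : IncChain X (· ≤ ·)) {β γ : Ordinal} (hβ : β < B.len) (hγ : γ < B.len)
    (h : β ≤ γ) : B.val β hβ ≤ B.val γ hγ := by
  rcases h.lt_or_eq with h | rfl
  · exact (B.inc β γ hβ hγ h).1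
  · exact le_rfl

noncomputable def ofStrictMono (s : ℕ → X) (hs : StrictMono s) : IncChain X (· ≤ ·) where
  len := ω
  val β hβ := s (Classical.choose (lt_omega0.1 hβ))
  inc β γ hβ hγ hβγ := by
    have hβ' := Classical.choose_spec (lt_omega0.1 hβ)
    have hγ' := Classical.choose_spec (lt_omega0.1 hγ)
    rw [hβ', hγ', Nat.cast_lt] at hβγ
    exact lt_iff_le_not_ge.1 (hs hβγ)

theorem ofStrictMono_val_natCast {s : ℕ → X} (hs : StrictMono s) (n : ℕ)
    (h : (n : Ordinal) < (ofStrictMono s hs).len) : (ofStrictMono s hs).val n h = s n := by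
  have hn := Classical.choose_spec (lt_omega0.1 h)
  rw [Nat.cast_inj] at hn
  simp only [ofStrictMono, ← hn]

theorem ofStrictMono_le_ofStrictMono_iff {s t : ℕ → X} (hs : StrictMono s) (ht : StrictMono t) :
    (ofStrictMono s hs).Le (ofStrictMono t ht) ↔ ∀ k, ∃ j, s k ≤ t j := by
  constructor
  · intro h k
    obtain ⟨γ, hγ, hle⟩ := h k (natCast_lt_omega0 k)
    obtain ⟨j, rfl⟩ := lt_omega0.1 hγ
    exact ⟨j, (ofStrictMono_val_natCast hs k _).symm.trans_le
      (hle.trans_eq (ofStrictMono_val_natCast ht j _))⟩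
  · intro h β hβ
    obtain ⟨k, rfl⟩ := lt_omega0.1 hβ
    obtain ⟨j, hj⟩ := h k
    exact ⟨j, natCast_lt_omega0 j, (ofStrictMono_val_natCast hs k _).trans_le
      (hj.trans_eq (ofStrictMono_val_natCast ht j _).symm)⟩

end Preorder

def singleton {X : Type u} {r : X → X → Prop} (x : X) : IncChain X r where
  len := 1
  val _ _ := x
  inc _ _ _ hγ hβγ := absurd (hβγ.trans_le (Order.lt_one_iff.1 hγ).le) not_lt_zero

theorem Maximal.len_ne_zero {X : Type u} {r : X → X → Prop} [Nonempty X] {B : IncChain X r}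
    (hB : B.Maximal) : B.len ≠ 0 := by
  intro h0
  obtain ⟨γ, hγ, -⟩ := hB (singleton (Classical.arbitrary X))
    (fun β hβ => absurd (h0 ▸ hβ) not_lt_zero) 0 zero_lt_one
  exact not_lt_zero (h0 ▸ hγ)

section OrderedAddMonoid

variable {X : Type u} [AddCommMonoid X] [PartialOrder X] [IsOrderedCancelAddMonoid X]

def addRight (B : IncChain X (· ≤ ·)) (g : X) : IncChain X (· ≤ ·) where
  len := B.len
  val β hβ := B.val β hβ + g
  inc β γ hβ hγ hβγ :=
    have h := B.inc β γ hβ hγ hβγ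
    ⟨add_le_add_left h.1 g, fun hle => h.2 (le_of_add_le_add_right hle)⟩

theorem Maximal.exists_add_le {B : IncChain X (· ≤ ·)} (hB : B.Maximal) {g : X} (hg : 0 ≤ g)
    (β : Ordinal) (hβ : β < B.len) : ∃ γ, ∃ hγ : γ < B.len, B.val β hβ + g ≤ B.val γ hγ :=
  hB (B.addRight g) (fun β hβ => ⟨β, hβ, le_add_of_nonneg_right hg⟩) β hβ

end OrderedAddMonoid

theorem not_maximal (B : IncChain (ℕ → ℕ) (· ≤ ·)) : ¬ B.Maximal := by
  intro hB
  have h0 : (0 : Ordinal) < B.len := pos_iff_ne_zero.2 hB.len_ne_zero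
  have dominates (g : ℕ → ℕ) : ∃ γ, ∃ hγ : γ < B.len, g ≤ B.val γ hγ := by
    obtain ⟨γ, hγ, h⟩ := hB.exists_add_le (fun _ => Nat.zero_le _ : 0 ≤ g) 0 h0
    exact ⟨γ, hγ, fun n => (Nat.le_add_left _ _).trans (h n)⟩
  choose β hβ hβle using fun k : ℕ => dominates fun _ => k
  obtain ⟨γ, hγ, hγle⟩ := dominates fun n => B.val (β n) (hβ n) n + 1
  by_cases hγβ : ∃ k, γ ≤ β k
  · obtain ⟨k, hk⟩ := hγβ
    have : B.val (β k) (hβ k) k + 1 ≤ B.val (β k) (hβ k) k :=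
      (hγle k).trans (B.val_le_val hγ (hβ k) hk k)
    omega
  · simp only [not_exists, not_le] at hγβ
    have : B.val γ hγ 0 + 1 ≤ B.val γ hγ 0 :=
      (hβle _ 0).trans (B.val_le_val (hβ _) hγ (hγβ _).le 0)
    omega

end IncChain

def FarBelow (f g : ℕ → ℕ) : Prop := ∀ C, ∀ᶠ n in atTop, f n + C ≤ g n

theorem exists_farBelow_of_countable {s : Set (ℕ → ℕ)} (hs : s.Countable) :
    ∃ g, ∀ f ∈ s, FarBelow f g := by
  obtain ⟨u, hu⟩ := Set.countable_iff_exists_subset_range.1 hs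
  refine ⟨fun n => ∑ i ∈ Finset.range (n + 1), u i n + n, ?_⟩
  rintro _ hf C
  obtain ⟨i, rfl⟩ := hu hf
  filter_upwards [eventually_ge_atTop (max i C)] with n hn
  have := Finset.single_le_sum (f := fun j => u j n) (fun _ _ => Nat.zero_le _)
    (Finset.mem_range.2 (show i < n + 1 by omega))
  omega

theorem exists_le_add_of_eventually_le {a b : ℕ → ℕ} (h : ∀ᶠ n in atTop, a n ≤ b n) :
    ∃ j, ∀ n, a n ≤ b n + j := by
  obtain ⟨N, hN⟩ := eventually_atTop.1 h
  refine ⟨∑ n ∈ Finset.range N, a n, fun n => ?_⟩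
  rcases lt_or_ge n N with hn | hn
  · have := Finset.single_le_sum (f := a) (fun _ _ => Nat.zero_le _) (Finset.mem_range.2 hn)
    omega
  · have := hN n hn
    omega

noncomputable def shiftChain (f : ℕ → ℕ) : IncChain (ℕ → ℕ) (· ≤ ·) :=
  IncChain.ofStrictMono (fun k n => f n + k) fun _ _ hkl =>
    Pi.lt_def.2 ⟨fun _ => Nat.add_le_add_left hkl.le _, 0, Nat.add_lt_add_left hkl _⟩

theorem shiftChain_le_shiftChain {f g : ℕ → ℕ} (h : FarBelow f g) :
    (shiftChain f).Le (shiftChain g) :=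
  (IncChain.ofStrictMono_le_ofStrictMono_iff _ _).2 fun k => exists_le_add_of_eventually_le (h k)

theorem not_shiftChain_le_shiftChain {f g : ℕ → ℕ} (h : FarBelow f g) :
    ¬ (shiftChain g).Le (shiftChain f) := by
  intro hle
  obtain ⟨j, hj⟩ := (IncChain.ofStrictMono_le_ofStrictMono_iff _ _).1 hle 0
  obtain ⟨n, hn⟩ := (h (j + 1)).exists
  have : g n + 0 ≤ f n + j := hj n
  omega

/-- in `(ℕ → ℕ, ≤)` with the pointwise order there is an increasing chain of
chains `(C_γ)_{γ<ω₁}` of length `ω₁` in `IC(ℕ → ℕ, ≤)` such that no `C_γ` is `⊑`-below any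
maximal increasing chain. -/
theorem stmt9 :
    ∃ F : IncChain (IncChain (ℕ → ℕ) (· ≤ ·)) IncChain.Le,
      F.len = (Cardinal.aleph 1).ord ∧
      ∀ (γ : Ordinal.{1}) (hγ : γ < F.len),
        ¬ ∃ B : IncChain (ℕ → ℕ) (· ≤ ·), B.Maximal ∧ (F.val γ hγ).Le B := by
  obtain ⟨f, hf⟩ := exists_seq_omega_one_of_countable_bounded FarBelow
    fun _ => exists_farBelow_of_countable
  refine ⟨⟨ω₁, fun γ _ => shiftChain (f γ), fun β γ _ hγ hβγ => ?_⟩, (ord_aleph 1).symm, ?_⟩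
  · exact ⟨shiftChain_le_shiftChain (hf β γ hβγ hγ), not_shiftChain_le_shiftChain (hf β γ hβγ hγ)⟩
  · rintro γ - ⟨B, hB, -⟩
    exact B.not_maximal hB
end

section
/- Let σ be a protagonist strategy in an initialized generalised safety/reachability game. Then σ is not admissible if and only if there exists a history h compatible with σ such that aVal(h, σ) ≤ cVal(h, σ) ≤ aVal(h) ≤ acVal(h) and at least one of these three inequalities is strict. -/
open scoped Classical

/-- A generalised safety/reachability game: a finite directed graph where every vertex has a
successor, a set `protag` of protagonist vertices (the rest belong to the antagonist), a set
`leaf` of leaves (each equipped with exactly a self-loop), an integer payoff attached to each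
leaf, and an initial vertex `v0`. -/
structure GSRGame where
  V : Type
  fin : Finite V
  E : V → V → Prop
  succ_exists : ∀ v : V, ∃ w : V, E v w
  protag : V → Prop
  leaf : V → Prop
  leaf_loop : ∀ v w : V, leaf v → (E v w ↔ w = v)
  pay : V → ℤ
  v0 : V

namespace GSRGame

variable (g : GSRGame)

/-- A strategy: to each nonempty history it assigns a successor of the last vertex.
(A protagonist strategy is only ever consulted at histories ending in a protagonist vertex,
an antagonist strategy at histories ending in an antagonist vertex.) -/
structure Strat where
  act : List g.V → g.V
  valid : ∀ (h : List g.V) (hne : h ≠ []), g.E (h.getLast hne) (act h)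

/-- One step of the play extending history `h`: the protagonist moves according to `σ` at
protagonist vertices, the antagonist according to `τ` elsewhere. -/
noncomputable def step (σ τ : g.Strat) (h : List g.V) : List g.V :=
  h ++ [if g.protag (h.getLastD g.v0) then σ.act h else τ.act h]

/-- The history obtained after `k` steps of play by `(σ, τ)` extending `h`. -/
noncomputable def playList (σ τ : g.Strat) (h : List g.V) : ℕ → List g.V
  | 0 => h
  | k + 1 => g.step σ τ (playList σ τ h k)

/-- The outcome (infinite path) induced by `(σ, τ)` from the history `h`. -/
noncomputable def play (σ τ : g.Strat) (h : List g.V) (k : ℕ) : g.V :=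
  (g.playList σ τ h k).getLastD g.v0

/-- The payoff of an outcome: the payoff of the leaf it reaches, and `0` if it reaches
no leaf. -/
noncomputable def payoffOf (ρ : ℕ → g.V) : ℤ :=
  if hx : ∃ k : ℕ, g.leaf (ρ k) then g.pay (ρ (Nat.find hx)) else 0

/-- The payoff `p(h, σ, τ)` of the outcome induced by `(σ, τ)` from the history `h`. -/
noncomputable def pval (σ τ : g.Strat) (h : List g.V) : ℤ :=
  g.payoffOf (g.play σ τ h)

/-- `h` is a history (a nonempty path starting at `v0`) compatible with the protagonist
strategy `σ`: every protagonist move along `h` agrees with `σ`. -/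
def Compat (σ : g.Strat) (h : List g.V) : Prop :=
  h ≠ [] ∧ h.head? = some g.v0 ∧ List.Chain' g.E h ∧
    ∀ (p : List g.V) (v : g.V), (p ++ [v]) <+: h → p ≠ [] →
      g.protag (p.getLastD g.v0) → σ.act p = v

/-- The cooperative value `cVal(h, σ)`. -/
noncomputable def cVal (σ : g.Strat) (h : List g.V) : ℤ :=
  sSup {z : ℤ | ∃ τ : g.Strat, z = g.pval σ τ h}

/-- The antagonistic value `aVal(h, σ)`. -/
noncomputable def aVal (σ : g.Strat) (h : List g.V) : ℤ :=
  sInf {z : ℤ | ∃ τ : g.Strat, z = g.pval σ τ h}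

/-- The antagonistic value `aVal(h)` of a history. -/
noncomputable def aValH (h : List g.V) : ℤ :=
  sSup {z : ℤ | ∃ σ : g.Strat, z = g.aVal σ h}

/-- The antagonistic-cooperative value `acVal(h)` of a history. -/
noncomputable def acVal (h : List g.V) : ℤ :=
  sSup {z : ℤ | ∃ σ : g.Strat, g.aValH h ≤ g.aVal σ h ∧ z = g.cVal σ h}

/-- Weak dominance `σ ⪯ σ'` (from the initial vertex `v0`). -/
def Dom (σ σ' : g.Strat) : Prop :=
  ∀ τ : g.Strat, g.pval σ τ [g.v0] ≤ g.pval σ' τ [g.v0]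

/-- Dominance `σ ≺ σ'`. -/
def SDom (σ σ' : g.Strat) : Prop :=
  g.Dom σ σ' ∧ ∃ τ : g.Strat, g.pval σ τ [g.v0] < g.pval σ' τ [g.v0]

/-- Admissibility: `σ` is dominated by no strategy. -/
def Admissible (σ : g.Strat) : Prop := ¬ ∃ σ' : g.Strat, g.SDom σ σ'

/-- `h` is a witness of non-dominance of `σ₁` by `σ₂`. -/
def NonDomWitness (σ₁ σ₂ : g.Strat) (h : List g.V) : Prop :=
  g.Compat σ₁ h ∧ g.Compat σ₂ h ∧ g.protag (h.getLastD g.v0) ∧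
    σ₁.act h ≠ σ₂.act h ∧ g.aVal σ₂ h < g.cVal σ₁ h

/-- `h` is a witness of non-admissibility of `σ`. -/
def NonAdmWitness (σ : g.Strat) (h : List g.V) : Prop :=
  g.Compat σ h ∧
    g.aVal σ h ≤ g.cVal σ h ∧ g.cVal σ h ≤ g.aValH h ∧ g.aValH h ≤ g.acVal h ∧
    (g.aVal σ h < g.cVal σ h ∨ g.cVal σ h < g.aValH h ∨ g.aValH h < g.acVal h)

end GSRGame

/-!
Given a witness `h`, let `σ'` agree with `σ` off the histories extending `h` and, from `h` on,
play a strategy attaining `acVal(h)` among those attaining `aVal(h)`. On every play reaching `h`,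
`σ` secures at most `cVal(h, σ) ≤ aVal(h)` while `σ'` secures at least `aVal(h)`; all other plays
are unchanged. So `σ ⪯ σ'`, and the strict inequality of the chain yields an antagonist that
leads to `h` and then makes `σ'` strictly better.

Conversely, if `σ ≺ σ'`, let `h` be where `σ` and `σ'` first diverge on a play on which `σ'` is
strictly better. An antagonist leading to `h`, then cooperating with `σ` and opposing `σ'`,
shows `cVal(h, σ) ≤ aVal(h, σ') ≤ aVal(h)`. If the whole chain were made of equalities, `σ'`
would be among the strategies over which `acVal(h)` is taken, so `σ'` could get at most
`acVal(h) = aVal(h, σ)` from `h`, contradicting that it beats `σ` there.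
-/

namespace GSRGame

variable {g : GSRGame}

theorem Strat.valid' (σ : g.Strat) {h : List g.V} (hne : h ≠ []) :
    g.E (h.getLastD g.v0) (σ.act h) := by
  rw [List.getLastD_eq_getLast?, List.getLast?_eq_some_getLast hne]
  exact σ.valid h hne

instance : Nonempty g.Strat :=
  ⟨⟨fun h => (g.succ_exists (h.getLastD g.v0)).choose, fun h hne => by
    simpa [List.getLastD_eq_getLast?, List.getLast?_eq_some_getLast hne] using
      (g.succ_exists (h.getLastD g.v0)).choose_spec⟩⟩

section Play

variable (σ τ : g.Strat)

theorem step_ne_nil (h : List g.V) : g.step σ τ h ≠ [] := by simp [step]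

theorem prefix_playList (h : List g.V) (k : ℕ) : h <+: g.playList σ τ h k := by
  induction k with
  | zero => exact List.prefix_refl h
  | succ k ih => exact ih.trans (List.prefix_append _ _)

theorem playList_ne_nil {h : List g.V} (hne : h ≠ []) (k : ℕ) : g.playList σ τ h k ≠ [] :=
  fun hk => hne (List.prefix_nil.mp (hk ▸ prefix_playList σ τ h k))

theorem playList_step (h : List g.V) (k : ℕ) :
    g.playList σ τ (g.step σ τ h) k = g.playList σ τ h (k + 1) := by
  induction k with
  | zero => rfl
  | succ k ih => rw [playList, ih]; rfl

theorem adj_getLastD_step {h : List g.V} (hne : h ≠ []) :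
    g.E (h.getLastD g.v0) ((g.step σ τ h).getLastD g.v0) := by
  rw [step, List.getLastD_concat]
  split_ifs
  exacts [σ.valid' hne, τ.valid' hne]

theorem step_of_protag {h : List g.V} (hp : g.protag (h.getLastD g.v0)) :
    g.step σ τ h = h ++ [σ.act h] := by
  rw [step, if_pos hp]

theorem protag_and_act_ne_of_step_ne {σ' : g.Strat} {h : List g.V}
    (hne : g.step σ τ h ≠ g.step σ' τ h) :
    g.protag (h.getLastD g.v0) ∧ σ.act h ≠ σ'.act h := by
  by_cases hp : g.protag (h.getLastD g.v0)
  · refine ⟨hp, fun hact => hne ?_⟩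
    rw [step_of_protag σ τ hp, step_of_protag σ' τ hp, hact]
  · exact absurd (by simp only [step, if_neg hp]) hne

end Play

section Payoff

theorem payoffOf_tail (ρ : ℕ → g.V) (h0 : g.leaf (ρ 0) → ρ 1 = ρ 0) :
    g.payoffOf (fun k => ρ (k + 1)) = g.payoffOf ρ := by
  unfold payoffOf
  by_cases hl : g.leaf (ρ 0)
  · have hl' : ∃ k, g.leaf (ρ (k + 1)) := ⟨0, (h0 hl).symm ▸ hl⟩
    rw [dif_pos hl', dif_pos ⟨0, hl⟩, (Nat.find_eq_zero hl').2 ((h0 hl).symm ▸ hl),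
      (Nat.find_eq_zero _).2 hl]
    exact congrArg g.pay (h0 hl)
  · have hiff : (∃ k, g.leaf (ρ (k + 1))) ↔ ∃ k, g.leaf (ρ k) :=
      ⟨fun ⟨k, hk⟩ => ⟨k + 1, hk⟩, fun ⟨k, hk⟩ => by
        cases k with
        | zero => exact absurd hk hl
        | succ k => exact ⟨k, hk⟩⟩
    by_cases hx : ∃ k, g.leaf (ρ k)
    · rw [dif_pos (hiff.2 hx), dif_pos hx, Nat.find_comp_succ hx (hiff.2 hx) hl]
    · rw [dif_neg (mt hiff.1 hx), dif_neg hx]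

variable (σ τ : g.Strat)

/-- A leaf only loops back to itself, so one more step does not change the outcome. -/
theorem pval_step {h : List g.V} (hne : h ≠ []) :
    g.pval σ τ (g.step σ τ h) = g.pval σ τ h := by
  have hplay : g.play σ τ (g.step σ τ h) = fun k => g.play σ τ h (k + 1) :=
    funext fun k => congrArg (List.getLastD · g.v0) (playList_step σ τ h k)
  rw [pval, pval, hplay]
  exact payoffOf_tail _ fun hl => (g.leaf_loop _ _ hl).1 (adj_getLastD_step σ τ hne)

theorem pval_playList {h : List g.V} (hne : h ≠ []) (k : ℕ) :
    g.pval σ τ (g.playList σ τ h k) = g.pval σ τ h := by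
  induction k with
  | zero => rfl
  | succ k ih => rw [playList, pval_step σ τ (playList_ne_nil σ τ hne k), ih]

theorem pval_eq_of_playList_eq {σ₁ σ₂ τ₁ τ₂ : g.Strat} {h₁ h₂ : List g.V}
    (hplay : ∀ k, g.playList σ₁ τ₁ h₁ k = g.playList σ₂ τ₂ h₂ k) :
    g.pval σ₁ τ₁ h₁ = g.pval σ₂ τ₂ h₂ :=
  congrArg g.payoffOf (funext fun k => congrArg (List.getLastD · g.v0) (hplay k))

theorem pval_congr {σ₁ σ₂ τ₁ τ₂ : g.Strat} {h : List g.V}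
    (hσ : ∀ l, h <+: l → σ₁.act l = σ₂.act l) (hτ : ∀ l, h <+: l → τ₁.act l = τ₂.act l) :
    g.pval σ₁ τ₁ h = g.pval σ₂ τ₂ h := by
  refine pval_eq_of_playList_eq fun k => ?_
  induction k with
  | zero => rfl
  | succ k ih =>
    have hp := prefix_playList σ₁ τ₁ h k
    simp only [playList, step, ← ih, hσ _ hp, hτ _ hp]

theorem pval_congr_of_protag {τ₁ τ₂ : g.Strat} {h : List g.V} (hne : h ≠ [])
    (hp : g.protag (h.getLastD g.v0))
    (hτ : ∀ l, h ++ [σ.act h] <+: l → τ₁.act l = τ₂.act l) :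
    g.pval σ τ₁ h = g.pval σ τ₂ h := by
  rw [← pval_step σ τ₁ hne, ← pval_step σ τ₂ hne, step_of_protag σ τ₁ hp,
    step_of_protag σ τ₂ hp]
  exact pval_congr (fun _ _ => rfl) hτ

end Payoff

section Values

def payoffs (g : GSRGame) : Set ℤ := insert 0 (Set.range g.pay)

theorem payoffs_finite : g.payoffs.Finite :=
  have := g.fin
  (Set.finite_range _).insert 0

theorem pval_mem_payoffs (σ τ : g.Strat) (h : List g.V) : g.pval σ τ h ∈ g.payoffs := by
  unfold pval payoffOf
  split
  · exact Set.mem_insert_of_mem _ ⟨_, rfl⟩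
  · exact Set.mem_insert _ _

variable (σ : g.Strat) (h : List g.V)

theorem finite_pvals : {z : ℤ | ∃ τ : g.Strat, z = g.pval σ τ h}.Finite :=
  payoffs_finite.subset (by rintro _ ⟨τ, rfl⟩; exact pval_mem_payoffs σ τ h)

theorem nonempty_pvals : {z : ℤ | ∃ τ : g.Strat, z = g.pval σ τ h}.Nonempty :=
  ⟨_, Classical.arbitrary _, rfl⟩

theorem exists_cVal_eq : ∃ τ, g.cVal σ h = g.pval σ τ h :=
  (nonempty_pvals σ h).csSup_mem (finite_pvals σ h)

theorem exists_aVal_eq : ∃ τ, g.aVal σ h = g.pval σ τ h :=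
  (nonempty_pvals σ h).csInf_mem (finite_pvals σ h)

theorem pval_le_cVal (τ : g.Strat) : g.pval σ τ h ≤ g.cVal σ h :=
  le_csSup (finite_pvals σ h).bddAbove ⟨τ, rfl⟩

theorem aVal_le_pval (τ : g.Strat) : g.aVal σ h ≤ g.pval σ τ h :=
  csInf_le (finite_pvals σ h).bddBelow ⟨τ, rfl⟩

theorem aVal_le_cVal : g.aVal σ h ≤ g.cVal σ h :=
  have ⟨τ, hτ⟩ := exists_cVal_eq σ h
  hτ ▸ aVal_le_pval σ h τ

theorem finite_aVals : {z : ℤ | ∃ σ : g.Strat, z = g.aVal σ h}.Finite :=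
  payoffs_finite.subset (by
    rintro _ ⟨σ, rfl⟩
    obtain ⟨τ, hτ⟩ := exists_aVal_eq σ h
    exact hτ ▸ pval_mem_payoffs σ τ h)

theorem aVal_le_aValH : g.aVal σ h ≤ g.aValH h :=
  le_csSup (finite_aVals h).bddAbove ⟨σ, rfl⟩

theorem exists_aValH_eq : ∃ σ : g.Strat, g.aValH h = g.aVal σ h := by
  have hne : {z : ℤ | ∃ σ : g.Strat, z = g.aVal σ h}.Nonempty :=
    ⟨_, Classical.arbitrary _, rfl⟩
  exact hne.csSup_mem (finite_aVals h)

theorem finite_acVals :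
    {z : ℤ | ∃ σ : g.Strat, g.aValH h ≤ g.aVal σ h ∧ z = g.cVal σ h}.Finite :=
  payoffs_finite.subset (by
    rintro _ ⟨σ, -, rfl⟩
    obtain ⟨τ, hτ⟩ := exists_cVal_eq σ h
    exact hτ ▸ pval_mem_payoffs σ τ h)

theorem cVal_le_acVal {σ : g.Strat} (hσ : g.aValH h ≤ g.aVal σ h) :
    g.cVal σ h ≤ g.acVal h :=
  le_csSup (finite_acVals h).bddAbove ⟨σ, hσ, rfl⟩

theorem exists_acVal_eq :
    ∃ σ : g.Strat, g.aValH h ≤ g.aVal σ h ∧ g.acVal h = g.cVal σ h := by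
  obtain ⟨σ, hσ⟩ := exists_aValH_eq h
  have hne : {z : ℤ | ∃ σ : g.Strat, g.aValH h ≤ g.aVal σ h ∧ z = g.cVal σ h}.Nonempty :=
    ⟨_, σ, hσ.le, rfl⟩
  exact hne.csSup_mem (finite_acVals h)

theorem aValH_le_acVal : g.aValH h ≤ g.acVal h :=
  have ⟨σ, hσ⟩ := exists_aValH_eq h
  hσ.le.trans ((aVal_le_cVal σ h).trans (cVal_le_acVal h hσ.le))

end Values

section Compat

variable {σ : g.Strat} {h : List g.V}

theorem Compat.ne_nil (hc : g.Compat σ h) : h ≠ [] := hc.1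

theorem Compat.head?_eq (hc : g.Compat σ h) : h.head? = some g.v0 := hc.2.1

theorem Compat.isChain (hc : g.Compat σ h) : h.IsChain g.E := hc.2.2.1

theorem Compat.act_eq (hc : g.Compat σ h) {p : List g.V} {v : g.V} (hp : p ++ [v] <+: h)
    (hpne : p ≠ []) (hprot : g.protag (p.getLastD g.v0)) : σ.act p = v :=
  hc.2.2.2 p v hp hpne hprot

theorem compat_singleton (σ : g.Strat) : g.Compat σ [g.v0] := by
  refine ⟨List.cons_ne_nil _ _, rfl, List.isChain_singleton _, fun p v hp hpne _ => ?_⟩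
  obtain rfl : p = [] := by simpa using hp.length_le
  exact absurd rfl hpne

theorem Compat.step (hc : g.Compat σ h) (τ : g.Strat) :
    g.Compat σ (g.step σ τ h) := by
  obtain ⟨hne, hhead, hch, hmov⟩ := hc
  refine ⟨step_ne_nil σ τ h, by simp [GSRGame.step, List.head?_append, hhead], ?_, ?_⟩
  · refine hch.append (List.isChain_singleton _) fun x hx y hy => ?_
    rw [Option.mem_def] at hx
    rw [List.head?_singleton, Option.mem_def, Option.some_inj] at hy
    have := adj_getLastD_step σ τ hne
    rwa [List.getLastD_eq_getLast?, hx, Option.getD_some, GSRGame.step, List.getLastD_concat,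
      hy] at this
  · intro p v hp hpne hprot
    rcases List.prefix_concat_iff.1 hp with heq | hp'
    · obtain ⟨rfl, hv⟩ := List.append_inj' heq rfl
      rw [List.singleton_inj, if_pos hprot] at hv
      exact hv.symm
    · exact hmov p v hp' hpne hprot

theorem Compat.playList (hc : g.Compat σ h) (τ : g.Strat) (k : ℕ) :
    g.Compat σ (g.playList σ τ h k) := by
  induction k with
  | zero => exact hc
  | succ k ih => exact ih.step τ

theorem playList_eq_of_forall_step {σ τ : g.Strat} {h : List g.V} (hne : h ≠ [])
    (hhead : h.head? = some g.v0)
    (hstep : ∀ l v, l ++ [v] <+: h → l ≠ [] → g.step σ τ l = l ++ [v]) :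
    g.playList σ τ [g.v0] (h.length - 1) = h := by
  suffices htake : ∀ k < h.length, g.playList σ τ [g.v0] k = h.take (k + 1) by
    have hlen := List.length_pos_iff.2 hne
    rw [htake _ (by omega), Nat.sub_add_cancel hlen, List.take_length]
  intro k hk
  induction k with
  | zero =>
    obtain ⟨a, t, rfl⟩ := List.exists_cons_of_ne_nil hne
    obtain rfl : a = g.v0 := by simpa using hhead
    rfl
  | succ k ih =>
    have hsnoc : h.take (k + 1) ++ [h[k + 1]] = h.take (k + 2) := by
      rw [← List.concat_eq_append]
      exact List.take_concat_get hk
    rw [playList, ih (by omega), hstep _ _ (hsnoc ▸ List.take_prefix _ _) (by simp [hne]), hsnoc]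

end Compat

section Strategies

theorem eq_of_append_singleton_prefix {α : Type*} {l L : List α} {a b : α} (ha : l ++ [a] <+: L)
    (hb : l ++ [b] <+: L) : a = b := by
  simpa using (List.prefix_of_prefix_length_le ha hb (by simp)).eq_of_length (by simp)

noncomputable def Strat.switchAt (σ₁ : g.Strat) (h : List g.V) (σ₂ : g.Strat) : g.Strat where
  act l := if h <+: l then σ₂.act l else σ₁.act l
  valid l hne := by
    split_ifs
    exacts [σ₂.valid l hne, σ₁.valid l hne]

noncomputable def Strat.follow (h : List g.V) (hch : h.IsChain g.E) (τ : g.Strat) :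
    g.Strat where
  act l := if hl : ∃ v, l ++ [v] <+: h then hl.choose else τ.act l
  valid l hne := by
    split_ifs with hl
    · exact (hch.prefix hl.choose_spec).rel_getLast_head_of_append hne (List.cons_ne_nil _ _)
    · exact τ.valid l hne

variable {σ₁ σ₂ : g.Strat} {h l : List g.V}

theorem Strat.switchAt_act_of_prefix (hl : h <+: l) :
    (σ₁.switchAt h σ₂).act l = σ₂.act l :=
  if_pos hl

theorem Strat.switchAt_act_of_not_prefix (hl : ¬ h <+: l) :
    (σ₁.switchAt h σ₂).act l = σ₁.act l :=
  if_neg hl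

theorem not_prefix_of_snoc_prefix {v : g.V} (hl : l ++ [v] <+: h) : ¬ h <+: l := fun hh => by
  have := hl.length_le.trans hh.length_le
  simp at this

theorem Strat.follow_act_of_snoc_prefix (hch : h.IsChain g.E) (τ : g.Strat) {v : g.V}
    (hl : l ++ [v] <+: h) : (Strat.follow h hch τ).act l = v := by
  have hex : ∃ v, l ++ [v] <+: h := ⟨v, hl⟩
  show dite _ _ _ = v
  rw [dif_pos hex]
  exact eq_of_append_singleton_prefix hex.choose_spec hl

theorem Strat.follow_act_of_prefix (hch : h.IsChain g.E) (τ : g.Strat) (hl : h <+: l) :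
    (Strat.follow h hch τ).act l = τ.act l :=
  dif_neg fun ⟨_, hv⟩ => not_prefix_of_snoc_prefix hv hl

theorem Compat.switchAt (hc : g.Compat σ₁ h) (σ₂ : g.Strat) :
    g.Compat (σ₁.switchAt h σ₂) h :=
  ⟨hc.ne_nil, hc.head?_eq, hc.isChain, fun _ _ hp hpne hprot => by
    rw [Strat.switchAt_act_of_not_prefix (not_prefix_of_snoc_prefix hp)]
    exact hc.act_eq hp hpne hprot⟩

theorem pval_follow {σ : g.Strat} (hc : g.Compat σ h) (τ : g.Strat) :
    g.pval σ (Strat.follow h hc.isChain τ) [g.v0] = g.pval σ τ h := by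
  have hreach : g.playList σ (Strat.follow h hc.isChain τ) [g.v0] (h.length - 1) = h := by
    refine playList_eq_of_forall_step hc.ne_nil hc.head?_eq fun l v hl hlne => ?_
    by_cases hp : g.protag (l.getLastD g.v0)
    · rw [step_of_protag _ _ hp, hc.act_eq hl hlne hp]
    · rw [step, if_neg hp, Strat.follow_act_of_snoc_prefix _ _ hl]
  rw [← pval_playList _ _ (List.cons_ne_nil _ _) (h.length - 1), hreach]
  exact pval_congr (fun _ _ => rfl) fun l hl => Strat.follow_act_of_prefix _ _ hl

end Strategies

section Dominance

theorem playList_eq_of_agree_off {σ₁ σ₂ : g.Strat} (τ : g.Strat) {h h₀ : List g.V}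
    (hagree : ∀ l, ¬ h <+: l → σ₁.act l = σ₂.act l) {k : ℕ}
    (hk : ∀ j < k, ¬ h <+: g.playList σ₁ τ h₀ j) :
    g.playList σ₁ τ h₀ k = g.playList σ₂ τ h₀ k := by
  induction k with
  | zero => rfl
  | succ k ih =>
    rw [playList, playList, ← ih fun j hj => hk j (by omega), step, step,
      hagree _ (hk k (by omega))]

theorem playList_find_eq {σ τ : g.Strat} {h : List g.V} (hne : h ≠ [])
    (hex : ∃ k, h <+: g.playList σ τ [g.v0] k) :
    g.playList σ τ [g.v0] (Nat.find hex) = h := by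
  have hmin : ∀ j < Nat.find hex, ¬ h <+: g.playList σ τ [g.v0] j :=
    fun j hj => Nat.find_min hex hj
  have hspec := Nat.find_spec hex
  generalize Nat.find hex = k at hmin hspec ⊢
  cases k with
  | zero =>
    rcases List.prefix_concat_iff.1 (show h <+: [] ++ [g.v0] from hspec) with heq | hnil
    · exact heq.symm
    · exact absurd (List.prefix_nil.1 hnil) hne
  | succ k =>
    rw [playList, step] at hspec ⊢
    rcases List.prefix_concat_iff.1 hspec with heq | hpre
    · exact heq.symm
    · exact absurd hpre (hmin k (by omega))

theorem pval_switchAt_self (σ σs τ : g.Strat) (h : List g.V) :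
    g.pval (σ.switchAt h σs) τ h = g.pval σs τ h :=
  pval_congr (fun _ hl => Strat.switchAt_act_of_prefix hl) fun _ _ => rfl

theorem dom_switchAt {σ σs : g.Strat} {h : List g.V} (hc : g.Compat σ h)
    (hle : ∀ τ, g.pval σ τ h ≤ g.pval σs τ h) : g.Dom σ (σ.switchAt h σs) := by
  intro τ
  have hagree : ∀ l, ¬ h <+: l → σ.act l = (σ.switchAt h σs).act l :=
    fun l hl => (Strat.switchAt_act_of_not_prefix hl).symm
  by_cases hex : ∃ k, h <+: g.playList σ τ [g.v0] k
  · have hfind := playList_find_eq hc.ne_nil hex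
    have hfind' : g.playList (σ.switchAt h σs) τ [g.v0] (Nat.find hex) = h :=
      (playList_eq_of_agree_off τ hagree fun j hj => Nat.find_min hex hj).symm.trans hfind
    have hv0 : [g.v0] ≠ [] := List.cons_ne_nil _ _
    rw [← pval_playList σ τ hv0 (Nat.find hex), hfind,
      ← pval_playList _ τ hv0 (Nat.find hex), hfind', pval_switchAt_self]
    exact hle τ
  · push Not at hex
    have hplay := fun k => playList_eq_of_agree_off τ hagree (k := k) fun j _ => hex j
    exact (pval_eq_of_playList_eq hplay).le

theorem not_dom_of_nonDomWitness {σ₁ σ₂ : g.Strat} {h : List g.V}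
    (hw : g.NonDomWitness σ₁ σ₂ h) : ¬ g.Dom σ₁ σ₂ := by
  obtain ⟨hc₁, hc₂, hp, hact, hlt⟩ := hw
  obtain ⟨τmax, hτmax⟩ := exists_cVal_eq σ₁ h
  obtain ⟨τmin, hτmin⟩ := exists_aVal_eq σ₂ h
  -- after `h`, cooperate with `σ₁`'s move and oppose `σ₂`'s
  set τ := Strat.follow h hc₁.isChain (τmax.switchAt (h ++ [σ₂.act h]) τmin)
  have h₁ : g.pval σ₁ τ [g.v0] = g.cVal σ₁ h := by
    rw [pval_follow hc₁, hτmax]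
    exact pval_congr_of_protag σ₁ hc₁.ne_nil hp fun l hl => Strat.switchAt_act_of_not_prefix
      fun hl' => hact (eq_of_append_singleton_prefix hl hl')
  have h₂ : g.pval σ₂ τ [g.v0] = g.aVal σ₂ h := by
    rw [pval_follow hc₂, hτmin]
    exact pval_congr_of_protag σ₂ hc₂.ne_nil hp fun l hl => Strat.switchAt_act_of_prefix hl
  exact fun hdom => (hdom τ).not_gt (h₁ ▸ h₂ ▸ hlt)

theorem exists_step_ne_of_pval_ne {σ σ' τ : g.Strat} {h₀ : List g.V}
    (hne : g.pval σ τ h₀ ≠ g.pval σ' τ h₀) :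
    ∃ n, g.playList σ τ h₀ n = g.playList σ' τ h₀ n ∧
      g.step σ τ (g.playList σ τ h₀ n) ≠ g.step σ' τ (g.playList σ τ h₀ n) := by
  by_contra! H
  refine hne (pval_eq_of_playList_eq fun k => ?_)
  induction k with
  | zero => rfl
  | succ k ih => rw [playList, playList, H k ih, ih]

theorem not_admissible_of_nonAdmWitness {σ : g.Strat} {h : List g.V}
    (hw : g.NonAdmWitness σ h) : ¬ g.Admissible σ := by
  obtain ⟨hc, -, hcle, -, hstrict⟩ := hw
  obtain ⟨σs, hσs, hacv⟩ := exists_acVal_eq h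
  have hle : ∀ τ, g.pval σ τ h ≤ g.pval σs τ h := fun τ =>
    calc g.pval σ τ h ≤ g.cVal σ h := pval_le_cVal σ h τ
      _ ≤ g.aValH h := hcle
      _ ≤ g.aVal σs h := hσs
      _ ≤ g.pval σs τ h := aVal_le_pval σs h τ
  have hlt : ∃ τ, g.pval σ τ h < g.pval σs τ h := by
    by_cases ha : g.aVal σ h < g.cVal σ h
    · obtain ⟨τ, hτ⟩ := exists_aVal_eq σ h
      exact ⟨τ, hτ ▸ ha.trans_le ((hcle.trans hσs).trans (aVal_le_pval σs h τ))⟩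
    · have hlt : g.cVal σ h < g.acVal h := by
        have := aValH_le_acVal h
        omega
      obtain ⟨τ, hτ⟩ := exists_cVal_eq σs h
      exact ⟨τ, (pval_le_cVal σ h τ).trans_lt (hτ ▸ hacv ▸ hlt)⟩
  obtain ⟨τ, hτ⟩ := hlt
  refine fun hadm => hadm ⟨σ.switchAt h σs, dom_switchAt hc hle, Strat.follow h hc.isChain τ, ?_⟩
  rwa [pval_follow hc, pval_follow (hc.switchAt σs), pval_switchAt_self]

theorem exists_nonAdmWitness_of_sDom {σ σ' : g.Strat} (hs : g.SDom σ σ') :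
    ∃ h, g.NonAdmWitness σ h := by
  obtain ⟨hdom, τ, hlt⟩ := hs
  obtain ⟨n, hn, hstep⟩ := exists_step_ne_of_pval_ne hlt.ne
  set h := g.playList σ τ [g.v0] n
  have hc : g.Compat σ h := (compat_singleton σ).playList τ n
  have hc' : g.Compat σ' h := by rw [hn]; exact (compat_singleton σ').playList τ n
  obtain ⟨hp, hact⟩ := protag_and_act_ne_of_step_ne σ τ hstep
  have hv0 : [g.v0] ≠ [] := List.cons_ne_nil _ _
  have hlt' : g.pval σ τ h < g.pval σ' τ h := by
    rwa [pval_playList σ τ hv0, hn, pval_playList σ' τ hv0]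
  have hcle : g.cVal σ h ≤ g.aVal σ' h :=
    not_lt.1 fun hgt => not_dom_of_nonDomWitness ⟨hc, hc', hp, hact, hgt⟩ hdom
  refine ⟨h, hc, aVal_le_cVal σ h, hcle.trans (aVal_le_aValH σ' h), aValH_le_acVal h, ?_⟩
  -- if the chain is constant, `σ'` competes for `acVal h`, so it cannot beat `σ` from `h`
  by_contra! hconst
  have hacv := cVal_le_acVal h (σ := σ') (by omega)
  have := pval_le_cVal σ' h τ
  have := aVal_le_pval σ h τ
  omega

end Dominance

end GSRGame

/-- `σ` is not admissible iff there is a history `h` compatible with `σ` such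
that `aVal(h, σ) ≤ cVal(h, σ) ≤ aVal(h) ≤ acVal(h)` with at least one inequality strict. -/
theorem stmt14 (g : GSRGame) (σ : g.Strat) :
    ¬ g.Admissible σ ↔
      ∃ h : List g.V, g.Compat σ h ∧
        g.aVal σ h ≤ g.cVal σ h ∧ g.cVal σ h ≤ g.aValH h ∧ g.aValH h ≤ g.acVal h ∧
        (g.aVal σ h < g.cVal σ h ∨ g.cVal σ h < g.aValH h ∨ g.aValH h < g.acVal h) := by
  constructor
  · intro hna
    obtain ⟨σ', hs⟩ := not_not.1 hna
    exact GSRGame.exists_nonAdmWitness_of_sDom hs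
  · rintro ⟨h, hw⟩
    exact GSRGame.not_admissible_of_nonAdmWitness hw
end
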